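/- arXiv:1502.03320 — 5 statements merged into one kernel-verified Lean document; each statement's English description precedes it below -/
import Mathlib

section
/- Let p be a prime and let A and B be two distinct finite sets of natural numbers, all of whose elements are less than p. Then the number of α ∈ ZMod p such that Π_{a∈A}(α − a) = Π_{b∈B}(α − b) in ZMod p is at most max(|A|,|B|). Consequently, for α chosen uniformly at random from ZMod p, the probability of this equality is at most max(|A|,|B|)/p; in particular, if p > (|A|+|B|)/ε then this probability is less than ε. -/
open Finset Polynomial

/-- The polynomial set-equality test underlying `HP-TestOut`.
For a prime `p` and distinct finite sets `A, B` of naturals `< p`, the number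
of `α ∈ ZMod p` with `∏_{a∈A} (α - a) = ∏_{b∈B} (α - b)` is at most
`max |A| |B|`; hence for uniformly random `α` the probability of equality is
at most `max |A| |B| / p`, and if `p > (|A|+|B|)/ε` it is less than `ε`. -/
theorem stmt4 (p : ℕ) (hp : p.Prime) [Fact p.Prime] (A B : Finset ℕ)
    (hA : ∀ a ∈ A, a < p) (hB : ∀ b ∈ B, b < p) (hAB : A ≠ B) :
    let bad : Finset (ZMod p) := (Finset.univ : Finset (ZMod p)).filter
      (fun α => ∏ a ∈ A, (α - (a : ZMod p)) = ∏ b ∈ B, (α - (b : ZMod p)))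
    bad.card ≤ max A.card B.card
    ∧ (bad.card : ℚ) / p ≤ (max A.card B.card : ℚ) / p
    ∧ (∀ ε : ℚ, 0 < ε → ((A.card : ℚ) + B.card) / ε < p → (bad.card : ℚ) / p < ε) := by
  intro bad
  have hp0 : (0 : ℚ) < p := by exact_mod_cast hp.pos
  -- images in ZMod p
  set A' : Finset (ZMod p) := A.image (Nat.cast) with hA'
  set B' : Finset (ZMod p) := B.image (Nat.cast) with hB'
  have hinjA : Set.InjOn (Nat.cast : ℕ → ZMod p) A := by
    intro x hx y hy h
    have := (ZMod.natCast_eq_natCast_iff' x y p).mp h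
    rwa [Nat.mod_eq_of_lt (hA x hx), Nat.mod_eq_of_lt (hA y hy)] at this
  have hinjB : Set.InjOn (Nat.cast : ℕ → ZMod p) B := by
    intro x hx y hy h
    have := (ZMod.natCast_eq_natCast_iff' x y p).mp h
    rwa [Nat.mod_eq_of_lt (hB x hx), Nat.mod_eq_of_lt (hB y hy)] at this
  have hcardA : A'.card = A.card := Finset.card_image_of_injOn hinjA
  have hcardB : B'.card = B.card := Finset.card_image_of_injOn hinjB
  have hA'B' : A' ≠ B' := by
    intro h
    apply hAB
    ext x
    constructor
    · intro hx
      have : (x : ZMod p) ∈ B' := h ▸ Finset.mem_image_of_mem _ hx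
      obtain ⟨y, hy, hxy⟩ := Finset.mem_image.mp this
      have : y = x := by
        have := (ZMod.natCast_eq_natCast_iff' y x p).mp hxy
        rwa [Nat.mod_eq_of_lt (hB y hy), Nat.mod_eq_of_lt (hA x hx)] at this
      exact this ▸ hy
    · intro hx
      have : (x : ZMod p) ∈ A' := h ▸ Finset.mem_image_of_mem _ hx
      obtain ⟨y, hy, hxy⟩ := Finset.mem_image.mp this
      have : y = x := by
        have := (ZMod.natCast_eq_natCast_iff' y x p).mp hxy
        rwa [Nat.mod_eq_of_lt (hA y hy), Nat.mod_eq_of_lt (hB x hx)] at this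
      exact this ▸ hy
  set P : (ZMod p)[X] := ∏ a ∈ A', (X - C a) with hP
  set Q : (ZMod p)[X] := ∏ b ∈ B', (X - C b) with hQ
  have hPQ : P ≠ Q := by
    intro h
    apply hA'B'
    have := congrArg Polynomial.roots h
    rw [hP, hQ, Polynomial.roots_prod_X_sub_C, Polynomial.roots_prod_X_sub_C] at this
    exact Finset.val_injective this
  have hf : P - Q ≠ 0 := sub_ne_zero.mpr hPQ
  have hdeg : (P - Q).natDegree ≤ max A.card B.card := by
    refine le_trans (Polynomial.natDegree_sub_le _ _) ?_
    apply max_le_max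
    · calc P.natDegree = A'.card := by
            rw [hP, Finset.prod_eq_multiset_prod,
              Polynomial.natDegree_multiset_prod_X_sub_C_eq_card]
            rfl
        _ ≤ A.card := le_of_eq hcardA
    · calc Q.natDegree = B'.card := by
            rw [hQ, Finset.prod_eq_multiset_prod,
              Polynomial.natDegree_multiset_prod_X_sub_C_eq_card]
            rfl
        _ ≤ B.card := le_of_eq hcardB
  -- bad ⊆ roots
  have hsub : bad ⊆ (P - Q).roots.toFinset := by
    intro α hα
    simp only [bad, Finset.mem_filter] at hα
    rw [Multiset.mem_toFinset, Polynomial.mem_roots hf]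
    have hev : ∀ (s : Finset ℕ) (hs : ∀ a ∈ s, a < p),
          Polynomial.eval α (∏ a ∈ s.image (Nat.cast : ℕ → ZMod p), (X - C a))
          = ∏ a ∈ s, (α - (a : ZMod p)) := by
      intro s hs
      rw [Polynomial.eval_prod]
      rw [Finset.prod_image (fun x hx y hy h => by
        have := (ZMod.natCast_eq_natCast_iff' x y p).mp h
        rwa [Nat.mod_eq_of_lt (hs x hx), Nat.mod_eq_of_lt (hs y hy)] at this)]
      simp
    rw [IsRoot, Polynomial.eval_sub, hP, hQ, hev A hA, hev B hB, hα.2, sub_self]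
  have h1 : bad.card ≤ max A.card B.card := by
    calc bad.card ≤ (P - Q).roots.toFinset.card := Finset.card_le_card hsub
      _ ≤ Multiset.card (P - Q).roots := Multiset.toFinset_card_le _
      _ ≤ (P - Q).natDegree := Polynomial.card_roots' _
      _ ≤ max A.card B.card := hdeg
  refine ⟨h1, ?_, ?_⟩
  · gcongr
    exact_mod_cast h1
  · intro ε hε hεp
    have hmax : (max A.card B.card : ℚ) ≤ (A.card : ℚ) + B.card := by
      exact max_le (le_add_of_nonneg_right (by positivity))
        (le_add_of_nonneg_left (by positivity))
    have : ((A.card : ℚ) + B.card) < ε * p := by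
      have := (div_lt_iff₀ hε).mp hεp
      linarith
    rw [div_lt_iff₀ hp0]
    calc (bad.card : ℚ) ≤ (max A.card B.card : ℚ) := by exact_mod_cast h1
      _ ≤ (A.card : ℚ) + B.card := hmax
      _ < ε * p := this
end

section
/- Let ℓ ≥ 2 be an integer, let U be a finite type, let (Ω, Pr) be a probability space, and let H : Ω → (U → Fin 2^ℓ) be a random hash function that is uniform and pairwise independent: for every x ∈ U and value a, Pr[H(x) = a] = 2^{-ℓ}, and for all distinct x, y ∈ U and values a, b, Pr[H(x) = a and H(y) = b] = 2^{-2ℓ}. Let W ⊆ U with 0 < |W| < 2^{ℓ-1}. Then, with j = ℓ − ⌈log₂ |W|⌉ − 1, the probability that exactly one w ∈ W satisfies H(w) < 2^j is at least 1/16. -/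
/-!
Let `k = |W|`, `c = ⌈log₂ k⌉` and let `A w` be the event `H w < 2^j`. Uniformity gives
`ℙ (A w) = p := 2^j / 2^ℓ = 2^-(c+1)`, so `x := k p ∈ [1/4, 1/2]`, and pairwise independence gives
`ℙ (A w ∩ A w') = p²`. The events "`w` is the only element of `W` whose event occurs" are disjoint
and each has probability at least `p - (k - 1) p²`, so exactly one element succeeds with
probability at least `x - x² ≥ x / 2 ≥ 1/8`.

Measurability comes for free: the fibres of a map whose fibre measures add up to `1` are null
measurable, which is all the additivity arguments need.
-/

open MeasureTheory ProbabilityTheory Finset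
open scoped ProbabilityTheory ENNReal

theorem Nat.pow_clog_le_mul {b n : ℕ} (hb : 1 < b) (hn : n ≠ 0) : b ^ clog b n ≤ b * n := by
  rcases (Nat.one_le_iff_ne_zero.2 hn).eq_or_lt with rfl | hn1
  · simpa using hb.le
  · have hpos := clog_pos hb hn1
    calc b ^ clog b n = b * b ^ (clog b n).pred := by
          rw [← pow_succ', Nat.succ_pred_eq_of_pos hpos]
      _ ≤ b * n := Nat.mul_le_mul_left b (pow_pred_clog_lt_self hb hn1).le

section NullMeasurable

variable {Ω : Type*} [MeasurableSpace Ω] {μ : Measure Ω}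

theorem nullMeasurableSet_of_measure_add_measure_compl_le [IsFiniteMeasure μ] {s : Set Ω}
    (h : μ s + μ sᶜ ≤ μ Set.univ) : NullMeasurableSet s μ := by
  set T := toMeasurable μ s
  set T' := toMeasurable μ sᶜ
  have hT : MeasurableSet T := measurableSet_toMeasurable _ _
  have hcover : T ∪ T' = Set.univ :=
    Set.eq_univ_of_forall fun ω ↦ (em (ω ∈ s)).imp (subset_toMeasurable μ s ·)
      (subset_toMeasurable μ sᶜ ·)
  -- `T ∪ T'` is everything, yet `μ T + μ T' ≤ μ univ`
  have hoverlap : μ (T ∩ T') = 0 := by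
    have := measure_union_add_inter (μ := μ) T (measurableSet_toMeasurable μ sᶜ)
    rw [hcover, measure_toMeasurable, measure_toMeasurable] at this
    exact le_zero_iff.1 <| (ENNReal.add_le_add_iff_left (measure_ne_top μ _)).1 <| by
      rw [add_zero, this]; exact h
  have hnull : μ (T \ s) = 0 :=
    measure_mono_null (Set.inter_subset_inter_right T (subset_toMeasurable μ sᶜ)) hoverlap
  rw [← Set.sdiff_sdiff_cancel_left (subset_toMeasurable μ s)]
  exact hT.nullMeasurableSet.diff (.of_null hnull)

variable {α : Type*} [Fintype α]

theorem nullMeasurableSet_fiber_of_sum_le [IsFiniteMeasure μ] (g : Ω → α)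
    (h : ∑ a, μ {ω | g ω = a} ≤ μ Set.univ) (a : α) : NullMeasurableSet {ω | g ω = a} μ := by
  classical
  refine nullMeasurableSet_of_measure_add_measure_compl_le (le_trans ?_ h)
  rw [← Finset.add_sum_erase _ _ (mem_univ a)]
  gcongr
  refine (measure_mono fun ω (hω : g ω ≠ a) ↦ ?_).trans (measure_biUnion_finset_le _ _)
  exact Set.mem_biUnion (mem_erase.2 ⟨hω, mem_univ _⟩) rfl

variable [IsProbabilityMeasure μ] {g : Ω → α}
  (hg : ∀ a, μ {ω | g ω = a} = (Fintype.card α : ℝ≥0∞)⁻¹)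
include hg

theorem nullMeasurableSet_preimage_of_uniform (s : Set α) : NullMeasurableSet (g ⁻¹' s) μ := by
  have hfiber := nullMeasurableSet_fiber_of_sum_le (μ := μ) g (by simp [hg])
  rw [← Set.biUnion_preimage_singleton]
  exact .biUnion s.to_countable fun a _ ↦ hfiber a

theorem measure_preimage_of_uniform (S : Finset α) :
    μ {ω | g ω ∈ S} = S.card * (Fintype.card α : ℝ≥0∞)⁻¹ := by
  have hS : {ω | g ω ∈ S} = ⋃ a ∈ S, {ω | g ω = a} := by ext; simp
  rw [hS, measure_biUnion_finset₀ (f := fun a ↦ {ω | g ω = a}) _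
    fun a _ ↦ nullMeasurableSet_preimage_of_uniform hg {a}]
  · simp [hg]
  · exact fun a _ b _ hab ↦ Disjoint.aedisjoint <|
      Set.disjoint_left.2 fun ω ha hb ↦ hab (ha.symm.trans hb)

end NullMeasurable

section ExactlyOne

variable {Ω ι : Type*} [MeasurableSpace Ω] (μ : Measure Ω)

theorem measure_le_measure_diff_biUnion_add_sum (s : Set Ω) (T : Finset ι) (t : ι → Set Ω) :
    μ s ≤ μ (s \ ⋃ i ∈ T, t i) + ∑ i ∈ T, μ (s ∩ t i) := by
  have hcover : s ⊆ (s \ ⋃ i ∈ T, t i) ∪ ⋃ i ∈ T, s ∩ t i := fun ω hω ↦ by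
    by_cases h : ω ∈ ⋃ i ∈ T, t i
    · obtain ⟨i, hi, hω'⟩ := Set.mem_iUnion₂.1 h
      exact Or.inr (Set.mem_biUnion hi ⟨hω, hω'⟩)
    · exact Or.inl ⟨hω, h⟩
  calc μ s ≤ μ (s \ ⋃ i ∈ T, t i) + μ (⋃ i ∈ T, s ∩ t i) :=
        (measure_mono hcover).trans (measure_union_le _ _)
    _ ≤ _ := by gcongr; exact measure_biUnion_finset_le _ _

theorem sum_measure_le_measure_existsUnique_add [DecidableEq ι] {A : ι → Set Ω} {W : Finset ι}
    (hA : ∀ i ∈ W, NullMeasurableSet (A i) μ) :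
    ∑ w ∈ W, μ (A w) ≤
      μ {ω | ∃! w, w ∈ W ∧ ω ∈ A w} + ∑ w ∈ W, ∑ w' ∈ W.erase w, μ (A w ∩ A w') := by
  set B : ι → Set Ω := fun w ↦ A w \ ⋃ w' ∈ W.erase w, A w'
  have hB : ∀ w ∈ W, NullMeasurableSet (B w) μ := fun w hw ↦
    (hA w hw).diff <| .biUnion (W.erase w).countable_toSet fun w' hw' ↦ hA w' (mem_of_mem_erase hw')
  have hdisj : (W : Set ι).Pairwise (Function.onFun (AEDisjoint μ) B) := fun w hw v hv hwv ↦
    Disjoint.aedisjoint <| Set.disjoint_left.2 fun _ hωw hωv ↦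
      hωv.2 (Set.mem_biUnion (mem_erase.2 ⟨hwv, hw⟩) hωw.1)
  have hsub : (⋃ w ∈ W, B w) ⊆ {ω | ∃! w, w ∈ W ∧ ω ∈ A w} := fun ω hω ↦ by
    obtain ⟨w, hw, hωA, hωB⟩ := Set.mem_iUnion₂.1 hω
    refine ⟨w, ⟨hw, hωA⟩, fun v ⟨hv, hωv⟩ ↦ by_contra fun hvw ↦ hωB ?_⟩
    exact Set.mem_biUnion (mem_erase.2 ⟨hvw, hv⟩) hωv
  calc ∑ w ∈ W, μ (A w)
      ≤ ∑ w ∈ W, (μ (B w) + ∑ w' ∈ W.erase w, μ (A w ∩ A w')) :=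
        sum_le_sum fun w _ ↦ measure_le_measure_diff_biUnion_add_sum μ _ _ _
    _ = μ (⋃ w ∈ W, B w) + ∑ w ∈ W, ∑ w' ∈ W.erase w, μ (A w ∩ A w') := by
        rw [sum_add_distrib, measure_biUnion_finset₀ hdisj hB]
    _ ≤ _ := by gcongr

end ExactlyOne

section Hashing

variable {Ω U α : Type*} [MeasurableSpace Ω] {μ : Measure Ω} [IsProbabilityMeasure μ] [Fintype α]

theorem le_measure_existsUnique_hash_mem_add_sq {H : Ω → U → α}
    (huniform : ∀ x a, μ {ω | H ω x = a} = (Fintype.card α : ℝ≥0∞)⁻¹)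
    (hpair : ∀ x y, x ≠ y → ∀ a b,
      μ {ω | H ω x = a ∧ H ω y = b} = (Fintype.card α : ℝ≥0∞)⁻¹ * (Fintype.card α : ℝ≥0∞)⁻¹)
    (W : Finset U) (S : Finset α) :
    let x : ℝ≥0∞ := W.card * (S.card * (Fintype.card α : ℝ≥0∞)⁻¹)
    x ≤ μ {ω | ∃! w, w ∈ W ∧ H ω w ∈ S} + x ^ 2 := by
  classical
  intro x
  set p : ℝ≥0∞ := S.card * (Fintype.card α : ℝ≥0∞)⁻¹
  have hA : ∀ u, μ {ω | H ω u ∈ S} = p := fun u ↦ measure_preimage_of_uniform (huniform u) S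
  have hAA : ∀ u v, u ≠ v → μ ({ω | H ω u ∈ S} ∩ {ω | H ω v ∈ S}) = p ^ 2 := fun u v huv ↦ by
    have hjoint : ∀ q : α × α, μ {ω | (H ω u, H ω v) = q} = (Fintype.card (α × α) : ℝ≥0∞)⁻¹ :=
      fun q ↦ by
        simp only [Prod.ext_iff, hpair u v huv, Fintype.card_prod, Nat.cast_mul]
        exact (ENNReal.mul_inv (by simp) (by simp)).symm
    have := measure_preimage_of_uniform hjoint (S ×ˢ S)
    simp only [mem_product, card_product, Fintype.card_prod, Nat.cast_mul] at this
    change μ {ω | H ω u ∈ S ∧ H ω v ∈ S} = _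
    rw [this, ENNReal.mul_inv (by simp) (by simp)]
    ring
  have key := sum_measure_le_measure_existsUnique_add μ (A := fun u ↦ {ω | H ω u ∈ S}) (W := W)
    fun u _ ↦ nullMeasurableSet_preimage_of_uniform (huniform u) _
  simp only [hA, sum_const, nsmul_eq_mul] at key
  rw [sum_congr rfl fun w hw ↦ sum_congr rfl fun w' hw' ↦ hAA w w' (ne_of_mem_erase hw').symm]
    at key
  refine key.trans (add_le_add_right ?_ _)
  calc ∑ w ∈ W, ∑ _w' ∈ W.erase w, p ^ 2 = W.card * ((W.card - 1 : ℕ) * p ^ 2) := by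
        rw [sum_congr rfl fun w hw ↦ by rw [sum_const, card_erase_of_mem hw, nsmul_eq_mul],
          sum_const, nsmul_eq_mul]
    _ ≤ W.card * (W.card * p ^ 2) := by gcongr; exact_mod_cast W.card.sub_le 1
    _ = x ^ 2 := by ring

end Hashing

theorem mem_Icc_natCast_div_two_pow_succ {k c : ℕ} (hk : k ≤ 2 ^ c) (hc : 2 ^ c ≤ 2 * k) :
    (k : ℝ≥0∞) / 2 ^ (c + 1) ∈ Set.Icc 4⁻¹ 2⁻¹ := by
  constructor
  · rw [ENNReal.le_div_iff_mul_le (by simp) (by simp), ENNReal.inv_mul_le_iff (by simp) (by simp),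
      show (4 : ℝ≥0∞) = 2 * 2 by norm_num, pow_succ, mul_comm, mul_assoc]
    exact_mod_cast Nat.mul_le_mul_left 2 hc
  · rw [ENNReal.div_le_iff (by simp) (by simp), pow_succ', ← mul_assoc,
      ENNReal.inv_mul_cancel (by simp) (by simp), one_mul]
    exact_mod_cast hk

theorem inv_eight_le_of_le_add_sq {x P : ℝ≥0∞} (hx : x ∈ Set.Icc 4⁻¹ 2⁻¹) (h : x ≤ P + x ^ 2) :
    8⁻¹ ≤ P := by
  have hsq : x ^ 2 ≤ x / 2 := by
    rw [sq, ENNReal.div_eq_inv_mul, mul_comm 2⁻¹]; gcongr; exact hx.2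
  have hhalf : x / 2 ≤ P := by
    have hxtop : x ≠ ⊤ := ne_top_of_le_ne_top (by simp) hx.2
    rw [← ENNReal.add_le_add_iff_right (ENNReal.div_ne_top hxtop two_ne_zero), ENNReal.add_halves]
    exact h.trans (by gcongr)
  calc (8 : ℝ≥0∞)⁻¹ = 4⁻¹ / 2 := by
        rw [ENNReal.div_eq_inv_mul, ← ENNReal.mul_inv (by simp) (by simp)]; norm_num
    _ ≤ x / 2 := by gcongr; exact hx.1
    _ ≤ P := hhalf

theorem stmt6_general {Ω : Type*} [MeasureSpace Ω] [IsProbabilityMeasure (ℙ : Measure Ω)]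
    {U : Type*} (ℓ : ℕ)
    (H : Ω → U → Fin (2 ^ ℓ))
    (huniform : ∀ (x : U) (a : Fin (2 ^ ℓ)),
      ℙ {ω | H ω x = a} = (2 ^ ℓ : ENNReal)⁻¹)
    (hpair : ∀ (x y : U), x ≠ y → ∀ (a b : Fin (2 ^ ℓ)),
      ℙ {ω | H ω x = a ∧ H ω y = b} = (2 ^ ℓ : ENNReal)⁻¹ * (2 ^ ℓ : ENNReal)⁻¹)
    (W : Finset U) (hW0 : 0 < W.card) (hW1 : W.card < 2 ^ (ℓ - 1)) :
    (1 : ENNReal) / 16 ≤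
      ℙ {ω | ∃! w, w ∈ W ∧ ((H ω w : ℕ) < 2 ^ (ℓ - Nat.clog 2 W.card - 1))} := by
  set c := Nat.clog 2 W.card
  have hℓ0 : ℓ ≠ 0 := by rintro rfl; rw [zero_tsub, pow_zero] at hW1; omega
  have hcℓ : c + 1 ≤ ℓ := by
    have := (Nat.clog_le_iff_le_pow one_lt_two).2 hW1.le; omega
  set j := ℓ - c - 1
  have hjc : j + (c + 1) = ℓ := by omega
  set S : Finset (Fin (2 ^ ℓ)) := Iio ⟨2 ^ j, Nat.pow_lt_pow_right one_lt_two (by omega)⟩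
  have key := le_measure_existsUnique_hash_mem_add_sq (μ := ℙ) (H := H)
    (fun x a ↦ by simpa using huniform x a) (fun x y hxy a b ↦ by simpa using hpair x y hxy a b)
    W S
  have hx : (W.card : ℝ≥0∞) * (S.card * (Fintype.card (Fin (2 ^ ℓ)) : ℝ≥0∞)⁻¹)
      = W.card / 2 ^ (c + 1) := by
    rw [Fin.card_Iio, Fintype.card_fin]
    push_cast
    rw [← hjc, pow_add, ENNReal.mul_inv (by simp) (by simp), ← mul_assoc (2 ^ j : ℝ≥0∞),
      ENNReal.mul_inv_cancel (by simp) (by simp), one_mul, ENNReal.div_eq_inv_mul, mul_comm]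
  have hS : ∀ a, a ∈ S ↔ (a : ℕ) < 2 ^ j := fun a ↦ by simp [S, Fin.lt_def]
  simp only [hx, hS] at key
  calc (1 : ℝ≥0∞) / 16 ≤ 8⁻¹ := by rw [one_div]; exact ENNReal.inv_le_inv.2 (by norm_num)
    _ ≤ _ := inv_eight_le_of_le_add_sq (mem_Icc_natCast_div_two_pow_succ
        (Nat.le_pow_clog one_lt_two _) (Nat.pow_clog_le_mul one_lt_two hW0.ne')) key

/-- Lemma 3 of the paper: If `H` is a pairwise-independent
uniform random hash function from a finite universe `U` into `Fin 2^ℓ`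
(`ℓ ≥ 2`), and `W ⊆ U` with `0 < |W| < 2^(ℓ-1)`, then with
`j = ℓ - ⌈log₂ |W|⌉ - 1`, the probability that exactly one `w ∈ W` has
`H w < 2^j` is at least `1/16`. -/
theorem stmt6 {Ω : Type*} [MeasureSpace Ω] [IsProbabilityMeasure (ℙ : Measure Ω)]
    {U : Type*} [Fintype U] (ℓ : ℕ) (hℓ : 2 ≤ ℓ)
    (H : Ω → U → Fin (2 ^ ℓ))
    (huniform : ∀ (x : U) (a : Fin (2 ^ ℓ)),
      ℙ {ω | H ω x = a} = (2 ^ ℓ : ENNReal)⁻¹)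
    (hpair : ∀ (x y : U), x ≠ y → ∀ (a b : Fin (2 ^ ℓ)),
      ℙ {ω | H ω x = a ∧ H ω y = b} = (2 ^ ℓ : ENNReal)⁻¹ * (2 ^ ℓ : ENNReal)⁻¹)
    (W : Finset U) (hW0 : 0 < W.card) (hW1 : W.card < 2 ^ (ℓ - 1)) :
    (1 : ENNReal) / 16 ≤
      ℙ {ω | ∃! w, w ∈ W ∧ ((H ω w : ℕ) < 2 ^ (ℓ - Nat.clog 2 W.card - 1))} :=
  stmt6_general ℓ H huniform hpair W hW0 hW1
end

section
/- Let (Ω, Pr) be a probability space, let W be a finite index set, and let (A_w)_{w∈W} be events such that Pr[A_w] = s for every w ∈ W and Pr[A_w ∩ A_{w'}] = s² for all distinct w, w' ∈ W (pairwise independence). Then the probability that exactly one of the events A_w occurs is at least |W| · s · (1 − (|W|−1)·s). -/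
/-!
Removing from each `A w` the other events leaves pairwise disjoint sets whose union is the event
"exactly one `A w` occurs", and by the union bound each of them has probability at least
`Pr[A w] - ∑_{w' ≠ w} Pr[A w ∩ A w'] = s - (|W| - 1) s²`. Summing over `w` gives the bound.
-/

open MeasureTheory ProbabilityTheory Finset
open scoped ProbabilityTheory

section ExactlyOne

variable {Ω ι : Type*} (W : Finset ι) (A : ι → Set Ω)

theorem setOf_existsUnique_mem_eq_biUnion_sdiff [DecidableEq ι] :
    {ω | ∃! w, w ∈ W ∧ ω ∈ A w} = ⋃ w ∈ W, A w \ ⋃ w' ∈ W.erase w, A w' := by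
  ext ω
  simp only [Set.mem_ofPred_eq, Set.mem_iUnion, Set.mem_sdiff, mem_erase, exists_prop, not_exists,
    not_and]
  constructor
  · rintro ⟨w, ⟨hw, hωw⟩, huniq⟩
    exact ⟨w, hw, hωw, fun w' ⟨hne, hw'⟩ hωw' => hne (huniq w' ⟨hw', hωw'⟩)⟩
  · rintro ⟨w, hw, hωw, honly⟩
    refine ⟨w, ⟨hw, hωw⟩, fun w' ⟨hw', hωw'⟩ => ?_⟩
    exact by_contra fun hne => honly w' ⟨hne, hw'⟩ hωw'

theorem pairwiseDisjoint_sdiff_biUnion_erase [DecidableEq ι] :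
    (W : Set ι).PairwiseDisjoint fun w => A w \ ⋃ w' ∈ W.erase w, A w' := by
  intro w _ w' hw' hne
  refine Set.disjoint_left.mpr fun ω hω hω' => hω.2 ?_
  exact Set.mem_biUnion (mem_erase.mpr ⟨hne.symm, hw'⟩) hω'.1

end ExactlyOne

section Bonferroni

variable {Ω ι : Type*} [MeasurableSpace Ω] (μ : Measure Ω) [IsFiniteMeasure μ]

theorem measureReal_le_measureReal_sdiff_biUnion_add_sum_inter (s : Set Ω) (S : Finset ι)
    (t : ι → Set Ω) :
    μ.real s ≤ μ.real (s \ ⋃ i ∈ S, t i) + ∑ i ∈ S, μ.real (s ∩ t i) := by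
  have hcover : s ⊆ (s \ ⋃ i ∈ S, t i) ∪ ⋃ i ∈ S, s ∩ t i := by
    rw [← Set.inter_iUnion₂, Set.sdiff_union_inter]
  calc μ.real s ≤ μ.real ((s \ ⋃ i ∈ S, t i) ∪ ⋃ i ∈ S, s ∩ t i) := measureReal_mono hcover
    _ ≤ μ.real (s \ ⋃ i ∈ S, t i) + μ.real (⋃ i ∈ S, s ∩ t i) := measureReal_union_le _ _
    _ ≤ _ := by gcongr; exact measureReal_biUnion_finset_le _ _

theorem sum_measureReal_sub_sum_inter_le_measureReal_existsUnique [DecidableEq ι]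
    (W : Finset ι) (A : ι → Set Ω) (hA : ∀ w ∈ W, MeasurableSet (A w)) :
    ∑ w ∈ W, μ.real (A w) - ∑ w ∈ W, ∑ w' ∈ W.erase w, μ.real (A w ∩ A w') ≤
      μ.real {ω | ∃! w, w ∈ W ∧ ω ∈ A w} := by
  have hmeas : ∀ w ∈ W, MeasurableSet (A w \ ⋃ w' ∈ W.erase w, A w') := fun w hw =>
    (hA w hw).diff <|
      .biUnion (W.erase w).countable_toSet fun w' hw' => hA w' (mem_of_mem_erase hw')
  rw [setOf_existsUnique_mem_eq_biUnion_sdiff,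
    measureReal_biUnion_finset (pairwiseDisjoint_sdiff_biUnion_erase W A) hmeas,
    sub_le_iff_le_add, ← sum_add_distrib]
  exact sum_le_sum fun w _ => measureReal_le_measureReal_sdiff_biUnion_add_sum_inter μ _ _ _

end Bonferroni

/-- If `(A_w)_{w ∈ W}` are events each of probability `s`, and
pairwise independent (`Pr[A_w ∩ A_w'] = s²` for `w ≠ w'`), then the
probability that exactly one of the events occurs is at least
`|W| · s · (1 − (|W|−1)·s)`. -/
theorem stmt7 {Ω : Type*} [MeasureSpace Ω] [IsProbabilityMeasure (ℙ : Measure Ω)]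
    {ι : Type*} (W : Finset ι) (A : ι → Set Ω)
    (hmeas : ∀ w ∈ W, MeasurableSet (A w)) (s : ℝ)
    (hs : ∀ w ∈ W, (ℙ (A w)).toReal = s)
    (hpair : ∀ w ∈ W, ∀ w' ∈ W, w ≠ w' → (ℙ (A w ∩ A w')).toReal = s ^ 2) :
    (W.card : ℝ) * s * (1 - ((W.card : ℝ) - 1) * s) ≤
      (ℙ {ω | ∃! w, w ∈ W ∧ ω ∈ A w}).toReal := by
  classical
  simp only [← measureReal_def] at hs hpair ⊢
  have hsingles : ∑ w ∈ W, (ℙ : Measure Ω).real (A w) = W.card * s := by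
    rw [sum_congr rfl hs, sum_const, nsmul_eq_mul]
  have hpairs : ∑ w ∈ W, ∑ w' ∈ W.erase w, (ℙ : Measure Ω).real (A w ∩ A w') =
      W.card * ((W.card - 1) * s ^ 2) := by
    rw [← nsmul_eq_mul, ← sum_const]
    refine sum_congr rfl fun w hw => ?_
    rw [sum_congr rfl fun w' hw' =>
        hpair w hw w' (mem_of_mem_erase hw') (ne_of_mem_erase hw').symm,
      sum_const, nsmul_eq_mul, cast_card_erase_of_mem hw]
  have hbonferroni := sum_measureReal_sub_sum_inter_le_measureReal_existsUnique ℙ W A hmeas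
  rw [hsingles, hpairs] at hbonferroni
  exact le_of_eq_of_le (by ring) hbonferroni
end

section
/- Let W be a finite set of natural numbers and suppose there exists j such that exactly one element of W is less than 2^j. Define min to be the least natural number i such that the number of elements of W less than 2^i is odd (such an i exists). Then min ≤ j and exactly one element of W is less than 2^{min}. -/
open Finset

/-- If some dyadic level `j` isolates a unique element of a
finite set `W ⊆ ℕ` (exactly one `w ∈ W` with `w < 2^j`), then the least
level `min` at which the count `|{w ∈ W : w < 2^min}|` is odd exists,
satisfies `min ≤ j`, and also isolates a unique element. -/
theorem stmt9 (W : Finset ℕ) (j : ℕ)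
    (hj : (W.filter (fun w => w < 2 ^ j)).card = 1) :
    ∃ h : ∃ i, Odd (W.filter (fun w => w < 2 ^ i)).card,
      Nat.find h ≤ j ∧ (W.filter (fun w => w < 2 ^ (Nat.find h))).card = 1 := by
  have h : ∃ i, Odd (W.filter (fun w => w < 2 ^ i)).card := ⟨j, by rw [hj]; exact odd_one⟩
  refine ⟨h, ?_⟩
  have hle : Nat.find h ≤ j := Nat.find_le (by rw [hj]; exact odd_one)
  have hmono : (W.filter (fun w => w < 2 ^ (Nat.find h))).card ≤
      (W.filter (fun w => w < 2 ^ j)).card := by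
    apply card_le_card
    intro x hx
    simp only [mem_filter] at hx ⊢
    exact ⟨hx.1, lt_of_lt_of_le hx.2 (Nat.pow_le_pow_right (by norm_num) hle)⟩
  have hodd := Nat.find_spec h
  refine ⟨hle, ?_⟩
  rw [hj] at hmono
  interval_cases hc : (W.filter (fun w => w < 2 ^ (Nat.find h))).card
  · simp at hodd
  · rfl
end

section
/- Let k ≥ 2 and choose x : ZMod k → Bool uniformly at random (each coordinate an independent fair bit). Interpreting x(i) = true as node i of a k-cycle picking its 'forward' incident cycle edge and x(i) = false as picking its 'backward' edge, edge i is picked by both its endpoints exactly when x(i) = true and x(i+1) = false. Then the probability that at least one edge is picked by both endpoints, i.e. Pr[∃ i ∈ ZMod k, x(i) = true ∧ x(i+1) = false], equals 1 − 2^{1-k} (in particular it is at least 1 − 1/2^{k-1}). -/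
/-!
If no `i` has `x i = true` and `x (i + 1) = false`, then `x i = true` propagates all the way
around the cycle, so `x` is constant. Hence exactly two of the `2 ^ k` configurations avoid the
event, and its probability is `(2 ^ k - 2) / 2 ^ k`.
-/

open Finset

theorem ZMod.forall_of_forall_imp_add_one {n : ℕ} [NeZero n] {p : ZMod n → Prop} {i : ZMod n}
    (hi : p i) (hstep : ∀ j, p j → p (j + 1)) (j : ZMod n) : p j := by
  have hreach : ∀ m : ℕ, p (i + m) := fun m => by
    induction m with
    | zero => simpa using hi
    | succ m ih => simpa [add_assoc] using hstep _ ih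
  simpa using hreach (j - i).val

theorem ZMod.eq_const_of_not_exists_true_false {n : ℕ} [NeZero n] {x : ZMod n → Bool}
    (h : ¬ ∃ i, x i = true ∧ x (i + 1) = false) :
    x = (fun _ => true) ∨ x = (fun _ => false) := by
  push Not at h
  by_cases hx : ∃ i, x i = true
  · obtain ⟨i, hi⟩ := hx
    exact .inl <| funext <|
      ZMod.forall_of_forall_imp_add_one hi fun j hj => Bool.ne_false_iff.mp (h j hj)
  · push Not at hx
    exact .inr <| funext fun j => by simpa using hx j

theorem ZMod.card_filter_not_exists_true_false (n : ℕ) [NeZero n] :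
    #{x : ZMod n → Bool | ¬ ∃ i, x i = true ∧ x (i + 1) = false} = 2 := by
  have hconst : ({x : ZMod n → Bool | ¬ ∃ i, x i = true ∧ x (i + 1) = false} : Finset _)
      = {fun _ => true, fun _ => false} := by
    ext x
    simp only [mem_filter, mem_univ, true_and, mem_insert, mem_singleton]
    refine ⟨ZMod.eq_const_of_not_exists_true_false, ?_⟩
    rintro (rfl | rfl) <;> simp
  rw [hconst, card_pair]
  exact fun h => by simpa using congrFun h 0

theorem stmt11_general (k : ℕ) [NeZero k] :
    (((Finset.univ : Finset (ZMod k → Bool)).filter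
        (fun x => ∃ i : ZMod k, x i = true ∧ x (i + 1) = false)).card : ℚ) /
      ((Finset.univ : Finset (ZMod k → Bool)).card : ℚ)
      = 1 - (2 : ℚ) ^ ((1 : ℤ) - (k : ℤ)) := by
  have hsplit := card_filter_add_card_filter_not (s := univ)
    (p := fun x : ZMod k → Bool => ∃ i, x i = true ∧ x (i + 1) = false)
  have hcard_univ : (#(univ : Finset (ZMod k → Bool)) : ℚ) = 2 ^ k := by simp
  rw [ZMod.card_filter_not_exists_true_false] at hsplit
  have hcard : (#{x : ZMod k → Bool | ∃ i, x i = true ∧ x (i + 1) = false} : ℚ) = 2 ^ k - 2 := by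
    rw [eq_sub_iff_add_eq, ← hcard_univ]
    exact_mod_cast hsplit
  rw [hcard, hcard_univ, zpow_sub₀ two_ne_zero, zpow_one, zpow_natCast]
  field_simp

/-- On a `k`-cycle (`k ≥ 2`) where each node `i ∈ ZMod k`
independently picks a uniform random bit `x i` (true = forward edge,
false = backward edge), the probability that some edge is picked by both
of its endpoints, i.e. `∃ i, x i = true ∧ x (i+1) = false`, equals
`1 - 2^(1-k)`. -/
theorem stmt11 (k : ℕ) (hk : 2 ≤ k) [NeZero k] :
    (((Finset.univ : Finset (ZMod k → Bool)).filter
        (fun x => ∃ i : ZMod k, x i = true ∧ x (i + 1) = false)).card : ℚ) /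
      ((Finset.univ : Finset (ZMod k → Bool)).card : ℚ)
      = 1 - (2 : ℚ) ^ ((1 : ℤ) - (k : ℤ)) :=
  stmt11_general k
end
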